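/- Let Y be a nonnegative real random variable with E[Y²] < ∞ whose law has no atoms (P(Y = t) = 0 for every t ∈ ℝ). Then for every real b ≥ 0, the function b ↦ E[(min(Y, b))²] is differentiable at b with derivative 2b · P(Y > b). -/

import Mathlib

open MeasureTheory Metric Filter

/-- If `Y` is a nonnegative random variable with `E[Y²] < ∞` whose law has no atoms,
then for every `b ≥ 0` the map `b ↦ E[(min(Y, b))²]` is differentiable at `b` with
derivative `2b · P(Y > b)`. -/
theorem capped_second_moment_hasDerivAt
    {Ω : Type*} [MeasurableSpace Ω] (μ : Measure Ω) [IsProbabilityMeasure μ]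
    (Y : Ω → ℝ) (hYmeas : Measurable Y) (hYsq : Integrable (fun ω => (Y ω) ^ 2) μ)
    (hYpos : 0 ≤ᵐ[μ] Y) (hNoAtom : ∀ t : ℝ, μ {ω | Y ω = t} = 0)
    (b : ℝ) (hb : 0 ≤ b) :
    HasDerivAt (fun c : ℝ => ∫ ω, (min (Y ω) c) ^ 2 ∂μ)
      (2 * b * (μ {ω | Y ω > b}).toReal) b := by
  set F' : Ω → ℝ := fun ω => Set.indicator {ω | b < Y ω} (fun _ => 2 * b) ω with hF'
  have hset : MeasurableSet {ω | b < Y ω} := measurableSet_lt measurable_const hYmeas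
  have hne : ∀ᵐ ω ∂μ, Y ω ≠ b := by
    have h0 := hNoAtom b
    rw [ae_iff]
    simpa using h0
  have key := hasDerivAt_integral_of_dominated_loc_of_lip
      (F := fun c ω => (min (Y ω) c) ^ 2) (F' := F') (x₀ := b)
      (bound := fun _ => 2 * (b + 1)) (μ := μ) (ball_mem_nhds b one_pos)
      (Eventually.of_forall fun c =>
        ((hYmeas.min measurable_const).pow_const 2).aestronglyMeasurable)
      ?hint ((measurable_const.indicator hset).aestronglyMeasurable) ?hlip
      (integrable_const _) ?hdiff
  case hint =>
    refine hYsq.mono ((hYmeas.min measurable_const).pow_const 2).aestronglyMeasurable ?_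
    filter_upwards [hYpos] with ω hω
    have h1 : |min (Y ω) b| ≤ |Y ω| := by
      rw [abs_of_nonneg (le_min hω hb), abs_of_nonneg hω]
      exact min_le_left _ _
    simp only [Real.norm_eq_abs, abs_pow]
    exact pow_le_pow_left₀ (abs_nonneg _) h1 2
  case hlip =>
    filter_upwards [hYpos] with ω hω
    replace hω : (0:ℝ) ≤ Y ω := hω
    apply LipschitzOnWith.of_dist_le_mul
    intro c hc c' hc'
    rw [mem_ball, Real.dist_eq] at hc hc'
    have habs : |c - b| < 1 := hc
    have habs' : |c' - b| < 1 := hc'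
    rw [abs_lt] at habs habs'
    obtain ⟨ha1, ha2⟩ := habs
    obtain ⟨ha1', ha2'⟩ := habs'
    set x := min (Y ω) c with hx
    set z := min (Y ω) c' with hz
    have hxb : |x| ≤ b + 1 := by
      rw [abs_le]
      constructor
      · exact le_min (by linarith) (by linarith)
      · exact le_trans (min_le_right _ _) (by linarith)
    have hzb : |z| ≤ b + 1 := by
      rw [abs_le]
      constructor
      · exact le_min (by linarith) (by linarith)
      · exact le_trans (min_le_right _ _) (by linarith)
    have hxz : |x - z| ≤ |c - c'| := by
      have := abs_min_sub_min_le_max (Y ω) c (Y ω) c'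
      simpa using this
    have heq : x ^ 2 - z ^ 2 = (x + z) * (x - z) := by ring
    rw [Real.dist_eq, Real.dist_eq, heq, abs_mul]
    have hcoe : ((Real.nnabs (2 * (b + 1))) : ℝ) = 2 * (b + 1) := by
      rw [Real.coe_nnabs, abs_of_nonneg (by linarith)]
    rw [hcoe]
    have hsum : |x + z| ≤ 2 * (b + 1) := by
      calc |x + z| ≤ |x| + |z| := abs_add_le _ _
        _ ≤ 2 * (b + 1) := by linarith
    exact mul_le_mul hsum hxz (abs_nonneg _) (by linarith)
  case hdiff =>
    filter_upwards [hYpos, hne] with ω hω hωne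
    rcases lt_or_gt_of_ne hωne with hlt | hgt
    · -- Y ω < b : locally constant
      have h2 : (fun c => (min (Y ω) c) ^ 2) =ᶠ[nhds b] fun _ => (Y ω) ^ 2 := by
        filter_upwards [lt_mem_nhds hlt] with c hc
        rw [min_eq_left hc.le]
      have hF'0 : F' ω = 0 :=
        Set.indicator_of_notMem (show ω ∉ {ω | b < Y ω} from not_lt.2 hlt.le) _
      rw [hF'0]
      exact (hasDerivAt_const b ((Y ω) ^ 2)).congr_of_eventuallyEq h2
    · -- b < Y ω : locally c ↦ c²
      have h2 : (fun c => (min (Y ω) c) ^ 2) =ᶠ[nhds b] fun c => c ^ 2 := by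
        filter_upwards [gt_mem_nhds hgt] with c hc
        rw [min_eq_right hc.le]
      have hF'v : F' ω = 2 * b :=
        Set.indicator_of_mem (show ω ∈ {ω | b < Y ω} from hgt) _
      rw [hF'v]
      have hd : HasDerivAt (fun c : ℝ => c ^ 2) (2 * b) b := by
        simpa using hasDerivAt_pow 2 b
      exact hd.congr_of_eventuallyEq h2
  have hint : (∫ ω, F' ω ∂μ) = 2 * b * (μ {ω | Y ω > b}).toReal := by
    rw [hF']
    rw [integral_indicator_const _ hset]
    simp [smul_eq_mul, measureReal_def]
    ring
  rw [hint] at key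
  exact key.2
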